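/- For every nonnegative integer n, ∑_{k=0}^{2n} (-1)^k S(n,k) equals 0 if n is odd and 1 if n is even. -/

import Mathlib

/-!
`T m k` is the coefficient of `X ^ k` in `(1 + X + X ^ 2) ^ m`, so `S n k` is the coefficient of
`X ^ k` in `P n = ∑_{j ≤ n} X ^ j * (1 + X + X ^ 2) ^ (n - j)`, a polynomial of degree at most `2 n`.
The alternating sum of its coefficients is therefore `P n` evaluated at `-1`, and since
`1 - 1 + 1 = 1` this is `∑_{j ≤ n} (-1) ^ j`.
-/

open Finset

/-- Trinomial coefficient: coefficient of x^i in (1+x+x^2)^n, zero for i<0 (and automatically zero for i>2n). -/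
def T (n : ℕ) (i : ℤ) : ℕ :=
  if 0 ≤ i then ∑ j ∈ Finset.range (i.toNat + 1), n.choose j * j.choose (i.toNat - j) else 0

/-- Partial sum trinomial coefficient. -/
def S (n : ℕ) (k : ℤ) : ℕ :=
  ∑ j ∈ Finset.range (n + 1), T (n - j) (k - j)

open Polynomial

theorem T_natCast (m k : ℕ) :
    T m k = ∑ j ∈ range (k + 1), m.choose j * j.choose (k - j) := by
  simp [T]

theorem T_of_neg (m : ℕ) {i : ℤ} (hi : i < 0) : T m i = 0 := by
  simp [T, not_le.2 hi]

section CommSemiring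

variable {R : Type*} [CommSemiring R]

theorem coeff_one_add_X_add_X_sq_pow (m k : ℕ) :
    ((1 + X + X ^ 2 : R[X]) ^ m).coeff k = T m k := by
  have hq : (1 + X + X ^ 2 : R[X]) = X * (1 + X) + 1 := by ring
  rw [hq, add_pow, finsetSum_coeff, T_natCast]
  simp only [one_pow, mul_one, mul_pow, mul_assoc, coeff_X_pow_mul', coeff_mul_natCast,
    coeff_one_add_X_pow, Nat.cast_sum, Nat.cast_mul]
  rw [← sum_filter, ← sum_subset (inter_subset_right : range (m + 1) ∩ range (k + 1) ⊆ _)]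
  · exact sum_congr (by ext; simp) fun j _ => mul_comm _ _
  · intro j hj hj'
    simp only [mem_range, mem_inter, not_and, not_lt] at hj hj'
    simp [Nat.choose_eq_zero_of_lt (by omega : m < j)]

variable (R) in
noncomputable def partialSumPoly (n : ℕ) : R[X] :=
  ∑ j ∈ range (n + 1), X ^ j * (1 + X + X ^ 2) ^ (n - j)

theorem coeff_partialSumPoly (n k : ℕ) : (partialSumPoly R n).coeff k = S n k := by
  simp only [partialSumPoly, S, finsetSum_coeff, coeff_X_pow_mul', Nat.cast_sum]
  refine sum_congr rfl fun j _ => ?_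
  split_ifs with hjk
  · rw [coeff_one_add_X_add_X_sq_pow, Nat.cast_sub hjk]
  · rw [T_of_neg _ (by omega), Nat.cast_zero]

theorem natDegree_partialSumPoly_le (n : ℕ) : (partialSumPoly R n).natDegree ≤ 2 * n := by
  refine natDegree_sum_le_of_forall_le _ _ fun j hj => ?_
  have hq : (1 + X + X ^ 2 : R[X]).natDegree ≤ 2 := by compute_degree
  calc (X ^ j * (1 + X + X ^ 2 : R[X]) ^ (n - j)).natDegree
      ≤ j + (n - j) * 2 :=
        natDegree_mul_le_of_le (natDegree_X_pow_le j) (natDegree_pow_le_of_le _ hq)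
    _ ≤ 2 * n := by rw [mem_range] at hj; omega

end CommSemiring

theorem eval_neg_one_partialSumPoly {R : Type*} [CommRing R] (n : ℕ) :
    (partialSumPoly R n).eval (-1) = ∑ j ∈ range (n + 1), (-1) ^ j := by
  simp [partialSumPoly, eval_finsetSum]

theorem partial_sum_alt_sum (n : ℕ) :
    ∑ k ∈ Finset.range (2 * n + 1), (-1 : ℤ) ^ k * S n k = if Odd n then 0 else 1 := by
  calc ∑ k ∈ range (2 * n + 1), (-1 : ℤ) ^ k * S n k
      = ∑ k ∈ range (2 * n + 1), (partialSumPoly ℤ n).coeff k * (-1) ^ k := by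
        simp only [coeff_partialSumPoly, mul_comm]
    _ = (partialSumPoly ℤ n).eval (-1) :=
        (eval_eq_sum_range' (Nat.lt_succ_of_le (natDegree_partialSumPoly_le n)) _).symm
    _ = ∑ j ∈ range (n + 1), (-1) ^ j := eval_neg_one_partialSumPoly n
    _ = if Odd n then 0 else 1 := by
        rw [neg_one_geom_sum]
        simp [Nat.even_add_one]
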